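/- The bracket on the dual space s* induced by δ_1 via ⟨[α,β], s⟩ = ⟨α⊗β, δ_1(s)⟩ has nonzero values [h*,x*] = -x*, [h*,y2*] = -y2*, [x*,y1*] = y2*, [y1*,y2*] = x*, [y1*,y1*] = 2h*, and the linear map h* ↦ h, x* ↦ x, y1* ↦ y2, y2* ↦ y1 is an isomorphism of Lie superalgebras from s* onto s; in particular (s, δ_1) is a self-dual super Lie bialgebra. -/

import Mathlib

/- ## The Lie superalgebra sl(2,1) as 3x3 supermatrices (grading 2|1) over ℚ -/

abbrev M3 := Matrix (Fin 3) (Fin 3) ℚ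

/-- sign (-1)^b -/
def sgn (b : Bool) : ℚ := if b then -1 else 1

/-- parity of the index i (grading 2|1): rows/columns 0,1 even, 2 odd -/
def σ3 (i : Fin 3) : Bool := decide (i = (2 : Fin 3))

/-- parity of the matrix unit E i j -/
def pi3 (i j : Fin 3) : Bool := σ3 i != σ3 j

/-- even part of a supermatrix -/
def evM (m : M3) : M3 := Matrix.of (fun i j => if σ3 i = σ3 j then m i j else 0)

/-- odd part of a supermatrix -/
def odM (m : M3) : M3 := Matrix.of (fun i j => if σ3 i = σ3 j then 0 else m i j)

/-- the super commutator, i.e. the bilinear extension of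
    [x,y] = xy - (-1)^{|x||y|} yx on homogeneous elements -/
def sbr (x y : M3) : M3 := x * y - (evM y * x + odM y * evM x - odM y * odM x)

/-- matrix units -/
def Eu (i j : Fin 3) : M3 := Matrix.single i j 1

/-- E11 + E33 (0-indexed: E00 + E22) -/
def A3 : M3 := Eu 0 0 + Eu 2 2

/-- E22 + E33 (0-indexed: E11 + E22) -/
def B3 : M3 := Eu 1 1 + Eu 2 2

/-- the supertrace -/
def str (m : M3) : ℚ := m 0 0 + m 1 1 - m 2 2

/-- sl(2,1): supermatrices with supertrace zero -/
def sl21 : Submodule ℚ M3 where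
  carrier := {m | str m = 0}
  add_mem' := by
    intro a b ha hb
    simp only [Set.mem_setOf_eq, str, Matrix.add_apply] at *
    linarith
  zero_mem' := by simp [str]
  smul_mem' := by
    intro c m hm
    simp only [Set.mem_setOf_eq, str, Matrix.smul_apply, smul_eq_mul] at *
    linear_combination c * hm

/-- m is homogeneous of parity p -/
def homogM (m : M3) (p : Bool) : Prop := m = (if p then odM m else evM m)

/- ## Tensors: g ⊗ g realized as 4-index arrays -/

abbrev T3 := Fin 3 → Fin 3 → Fin 3 → Fin 3 → ℚ

/-- a ⊗ b -/
def tm (a b : M3) : T3 := fun i j k l => a i j * b k l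

/-- the super permutation map T_s(a ⊗ b) = (-1)^{|a||b|} b ⊗ a -/
def TsM (t : T3) : T3 := fun i j k l => sgn (pi3 i j && pi3 k l) * t k l i j

/-- a ∧ b = a ⊗ b - (-1)^{|a||b|} b ⊗ a -/
def wdg (a b : M3) : T3 := tm a b - TsM (tm a b)

/-- the Casimir 2-tensor Ω of sl(2,1) -/
def Omega : T3 :=
  tm A3 (-B3) + tm (-B3) A3 + tm (Eu 0 1) (Eu 1 0) + tm (Eu 1 0) (Eu 0 1)
  - tm (Eu 0 2) (Eu 2 0) + tm (Eu 2 0) (Eu 0 2) - tm (Eu 1 2) (Eu 2 1) + tm (Eu 2 1) (Eu 1 2)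

/-- the r-matrix r(f) -/
def rf : T3 :=
  tm (-B3) A3 + tm (Eu 0 1) (Eu 1 0) - tm (Eu 0 2) (Eu 2 0)
  + tm (Eu 2 1) (Eu 1 2) - tm (Eu 0 2) (Eu 0 2) + tm (Eu 1 2) (Eu 1 2)

/-- the standard r-matrix r_s -/
def rs : T3 :=
  tm (-B3) A3 + tm (Eu 0 1) (Eu 1 0) - tm (Eu 0 2) (Eu 2 0) + tm (Eu 2 1) (Eu 1 2)

/-- the super adjoint action of g on g ⊗ g:
    g · (a ⊗ b) = [g,a] ⊗ b + (-1)^{|g||a|} a ⊗ [g,b]  (= [g⊗1 + 1⊗g, t]) -/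
def act (g : M3) (t : T3) : T3 := fun i j k l =>
  sbr g (Matrix.of (fun a b => t a b k l)) i j
  + sbr (evM g) (Matrix.of (fun a b => t i j a b)) k l
  + sgn (pi3 i j) * sbr (odM g) (Matrix.of (fun a b => t i j a b)) k l

/-- the cocommutator δ_f(g) = [g⊗1 + 1⊗g, r(f)] -/
def δf (g : M3) : T3 := act g rf

/-- the standard cocommutator δ_s(g) = [g⊗1 + 1⊗g, r_s] -/
def δs (g : M3) : T3 := act g rs

/-- the linear map f defining r(f) -/
def fmap (m : M3) : M3 :=
  m 1 1 • B3 + m 0 1 • Eu 0 1 + (m 0 2 - m 2 0) • Eu 0 2 + m 2 1 • (Eu 1 2 + Eu 2 1)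

/- ## Distinguished subalgebras -/

def S1 : Submodule ℚ M3 := Submodule.span ℚ {A3, Eu 1 0, Eu 1 2, Eu 0 2 + Eu 2 0}
def S2 : Submodule ℚ M3 := Submodule.span ℚ {B3, Eu 0 1, Eu 0 2, Eu 1 2 + Eu 2 1}
def T1 : Submodule ℚ M3 := Submodule.span ℚ {A3, Eu 1 0, Eu 1 2, Eu 2 0}
def T2 : Submodule ℚ M3 := Submodule.span ℚ {B3, Eu 0 1, Eu 0 2, Eu 2 1}

/-- S1 ⊗ S1 inside T3 -/
def TS1 : Submodule ℚ T3 := Submodule.span ℚ {t : T3 | ∃ a ∈ S1, ∃ b ∈ S1, t = tm a b}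
/-- S2 ⊗ S2 inside T3 -/
def TS2 : Submodule ℚ T3 := Submodule.span ℚ {t : T3 | ∃ a ∈ S2, ∃ b ∈ S2, t = tm a b}

/- ## The abstract 4-dimensional Lie superalgebras s and t
     basis: e0 = h, e1 = x (even), e2 = y1, e3 = y2 (odd) -/

abbrev V4 := Fin 4 → ℚ

/-- parity of the basis vectors of s (h, x even; y1, y2 odd) -/
def pV (i : Fin 4) : Bool := decide (2 ≤ i.val)

/-- basis vectors -/
def eV (i : Fin 4) : V4 := fun j => if j = i then 1 else 0

/-- structure constants of s: [h,x] = -x, [h,y1] = -y1, [x,y2] = y1,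
    [y1,y2] = x, [y2,y2] = 2h (and super-antisymmetric partners) -/
def cS : Fin 4 → Fin 4 → V4 :=
  ![![0, -eV 1, -eV 2, 0],
    ![eV 1, 0, 0, eV 2],
    ![eV 2, 0, 0, eV 1],
    ![0, -eV 2, eV 1, (2 : ℚ) • eV 0]]

/-- the bracket of s -/
def brS (u v : V4) : V4 := fun k => ∑ i : Fin 4, ∑ j : Fin 4, u i * v j * cS i j k

/-- structure constants of t: [h,x] = -x, [h,y1] = -y1, [y1,y2] = x -/
def cT : Fin 4 → Fin 4 → V4 :=
  ![![0, -eV 1, -eV 2, 0],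
    ![eV 1, 0, 0, 0],
    ![eV 2, 0, 0, eV 1],
    ![0, 0, eV 1, 0]]

/-- the bracket of t -/
def brT (u v : V4) : V4 := fun k => ∑ i : Fin 4, ∑ j : Fin 4, u i * v j * cT i j k

/-- even part in s -/
def evV (u : V4) : V4 := fun i => if pV i then 0 else u i
/-- odd part in s -/
def odV (u : V4) : V4 := fun i => if pV i then u i else 0
/-- u is homogeneous of parity p -/
def homogV (u : V4) (p : Bool) : Prop := u = (if p then odV u else evV u)

/-- derived series of s -/
def derS : ℕ → Submodule ℚ V4
  | 0 => ⊤
  | n + 1 => Submodule.span ℚ {w : V4 | ∃ u ∈ derS n, ∃ v ∈ derS n, w = brS u v}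

/- ## Tensors over s -/

abbrev TV := Fin 4 → Fin 4 → ℚ
abbrev T3V := Fin 4 → Fin 4 → Fin 4 → ℚ

def tmV (u v : V4) : TV := fun i j => u i * v j
def TsV (t : TV) : TV := fun i j => sgn (pV i && pV j) * t j i
/-- a ∧ b in s ⊗ s -/
def wdgV (u v : V4) : TV := tmV u v - TsV (tmV u v)

/-- the cocommutator δ_1 on s: δ_1(h) = -y1∧y1, δ_1(x) = x∧h - y1∧y2,
    δ_1(y1) = 0, δ_1(y2) = y2∧h + x∧y1 -/
def δ1 (u : V4) : TV :=
  u 0 • (-(wdgV (eV 2) (eV 2)))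
  + u 1 • (wdgV (eV 1) (eV 0) - wdgV (eV 2) (eV 3))
  + u 3 • (wdgV (eV 3) (eV 0) + wdgV (eV 1) (eV 2))

/-- the cocommutator δ_2 on s: δ_2(h) = y1∧y1, δ_2(x) = -(x∧h - y1∧y2),
    δ_2(y1) = 0, δ_2(y2) = -(y2∧h + x∧y1) -/
def δ2 (u : V4) : TV :=
  u 0 • (wdgV (eV 2) (eV 2))
  + u 1 • (-(wdgV (eV 1) (eV 0) - wdgV (eV 2) (eV 3)))
  + u 3 • (-(wdgV (eV 3) (eV 0) + wdgV (eV 1) (eV 2)))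

/-- super pairing ⟨α⊗β, u⊗v⟩ = (-1)^{|β||u|} α(u) β(v), with α, β written in the
    dual basis coordinates -/
def pairV (al be : V4) (t : TV) : ℚ :=
  ∑ i : Fin 4, ∑ j : Fin 4, sgn (pV i && pV j) * al i * be j * t i j

/-- the bracket on s* induced by δ_1: ⟨[α,β], s⟩ = ⟨α⊗β, δ_1(s)⟩ -/
def dbr (al be : V4) : V4 := fun k => pairV al be (δ1 (eV k))

/-- the linear map s* → s given by h* ↦ h, x* ↦ x, y1* ↦ y2, y2* ↦ y1 -/
def θS (al : V4) : V4 := fun k => al (![0, 1, 3, 2] k)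

/-- (δ_1 ⊗ Id) on tensors -/
def d1Id (t : TV) : T3V := fun i j k => ∑ a : Fin 4, δ1 (eV a) i j * t a k

/-- the super cyclic symmetrizer Alt_s on 3-tensors -/
def AltS (t : T3V) : T3V := fun i j k =>
  t i j k + sgn (pV k && (pV i != pV j)) * t k i j + sgn (pV i && (pV j != pV k)) * t j k i

/-- super adjoint action of g ∈ s on s ⊗ s -/
def actV (g : V4) (t : TV) : TV := fun i j =>
  (∑ a : Fin 4, brS g (eV a) i * t a j)
  + (∑ b : Fin 4, t i b * (brS (evV g) (eV b) j + sgn (pV i) * brS (odV g) (eV b) j))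

/- ## identification maps -/

/-- the map s → sl(2,1) inverse to S1 → s, A ↦ -h, E21 ↦ x, E13+E31 ↦ -y2, E23 ↦ y1 -/
def ψ9 (u : V4) : M3 := u 0 • (-A3) + u 1 • Eu 1 0 + u 2 • Eu 1 2 + u 3 • (-(Eu 0 2 + Eu 2 0))

/-- the map s → sl(2,1), h ↦ E22+E33, x ↦ E12, y1 ↦ E13, y2 ↦ E23+E32 -/
def ψ10 (u : V4) : M3 := u 0 • B3 + u 1 • Eu 0 1 + u 2 • Eu 0 2 + u 3 • (Eu 1 2 + Eu 2 1)

/-- the map t → sl(2,1), h ↦ E22+E33, x ↦ E12, y1 ↦ E13, y2 ↦ E32 -/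
def ψ18 (u : V4) : M3 := u 0 • B3 + u 1 • Eu 0 1 + u 2 • Eu 0 2 + u 3 • Eu 2 1

/-!
Pairing `α ⊗ β` with a wedge `eₐ ∧ e_b` of basis vectors gives `±α(eₐ)β(e_b) - α(e_b)β(eₐ)`,
so the dual bracket can be written down in coordinates from the values of `δ_1` on the basis. The result
is the coordinate formula of the bracket of `s` with the coordinates of `y1` and `y2` exchanged,
and this exchange `θS` is an involution.
-/

lemma pairV_add (al be : V4) (t t' : TV) :
    pairV al be (t + t') = pairV al be t + pairV al be t' := by
  simp only [pairV, Pi.add_apply, mul_add, Finset.sum_add_distrib]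

lemma pairV_smul (al be : V4) (c : ℚ) (t : TV) : pairV al be (c • t) = c * pairV al be t := by
  simp only [pairV, Pi.smul_apply, smul_eq_mul, Finset.mul_sum]
  exact Finset.sum_congr rfl fun _ _ => Finset.sum_congr rfl fun _ _ => by ring

lemma pairV_neg (al be : V4) (t : TV) : pairV al be (-t) = -pairV al be t := by
  simpa using pairV_smul al be (-1) t

lemma pairV_sub (al be : V4) (t t' : TV) :
    pairV al be (t - t') = pairV al be t - pairV al be t' := by
  rw [sub_eq_add_neg, pairV_add, pairV_neg, ← sub_eq_add_neg]

lemma pairV_zero (al be : V4) : pairV al be 0 = 0 := by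
  simpa using pairV_smul al be 0 0

lemma sgn_mul_self (b : Bool) : sgn b * sgn b = 1 := by
  cases b <;> norm_num [sgn]

lemma pairV_wdgV_eV (al be : V4) (a b : Fin 4) :
    pairV al be (wdgV (eV a) (eV b)) = sgn (pV a && pV b) * al a * be b - al b * be a := by
  simp [pairV, wdgV, tmV, TsV, eV, mul_sub, Finset.sum_sub_distrib]
  linear_combination al b * be a * sgn_mul_self (pV b && pV a)

lemma dbr_eq (al be : V4) :
    dbr al be = ![2 * al 2 * be 2,
      -(al 0 * be 1) + al 1 * be 0 + al 2 * be 3 + al 3 * be 2,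
      0,
      -(al 0 * be 3) + al 1 * be 2 - al 2 * be 1 + al 3 * be 0] := by
  funext k
  fin_cases k <;>
    simp [dbr, δ1, eV, pairV_add, pairV_sub, pairV_neg, pairV_zero, pairV_wdgV_eV, pV, sgn] <;> ring

lemma brS_eq (u v : V4) :
    brS u v = ![2 * u 3 * v 3,
      -(u 0 * v 1) + u 1 * v 0 + u 2 * v 3 + u 3 * v 2,
      -(u 0 * v 2) + u 1 * v 3 + u 2 * v 0 - u 3 * v 1,
      0] := by
  funext k
  fin_cases k <;> simp [brS, cS, eV, Fin.sum_univ_four] <;> ring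

lemma θS_involutive : Function.Involutive θS := fun u => by
  funext k; fin_cases k <;> rfl

lemma θS_dbr (al be : V4) : θS (dbr al be) = brS (θS al) (θS be) := by
  rw [dbr_eq, brS_eq]
  funext k
  fin_cases k <;> simp [θS] <;> ring

/-- the induced bracket on s* has the listed values, and
    h* ↦ h, x* ↦ x, y1* ↦ y2, y2* ↦ y1 is an isomorphism s* ≅ s; in particular
    (s, δ_1) is a self-dual super Lie bialgebra -/
theorem stmt15 :
    dbr (eV 0) (eV 1) = -eV 1 ∧
    dbr (eV 0) (eV 3) = -eV 3 ∧
    dbr (eV 1) (eV 2) = eV 3 ∧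
    dbr (eV 2) (eV 3) = eV 1 ∧
    dbr (eV 2) (eV 2) = (2 : ℚ) • eV 0 ∧
    (∀ al be : V4, θS (dbr al be) = brS (θS al) (θS be)) ∧
    Function.Bijective θS := by
  refine ⟨?_, ?_, ?_, ?_, ?_, θS_dbr, θS_involutive.bijective⟩ <;>
    (rw [dbr_eq]; funext k; fin_cases k <;> simp [eV])
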